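/- Let γ > 0 and N be the solution operator of v'' − γv − v³ + w = 0 on (0,∞) with Neumann condition at 0 and decay at infinity. Then for any w₁, w₂ ∈ L^2(0,∞), ‖Nw₂ − Nw₁‖_{H^1(0,∞)} ≤ max{1, 1/γ} · ‖w₂ − w₁‖_{L^2(0,∞)}. -/

import Mathlib

/-!
The difference `u = v₂ - v₁` solves `u'' = γ u + (v₂³ - v₁³) - (w₂ - w₁)`. Multiplying by `u` and
integrating by parts over `(0, ∞)` (the Neumann condition kills the boundary term at `0`) gives
`γ ‖u‖² + ‖u'‖² + ∫ (v₂³ - v₁³)(v₂ - v₁) = ∫ (w₂ - w₁) u`, and the middle integral is nonnegative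
because cubing is monotone. Cauchy–Schwarz bounds the right-hand side by `‖w₂ - w₁‖ ‖u‖`, and
elementary algebra turns `γ ‖u‖² + ‖u'‖² ≤ ‖w₂ - w₁‖ ‖u‖` into the claim. The nonlinear term is
integrable because `v₁` and `v₂` are continuous and decay at infinity, hence bounded.
-/

open MeasureTheory Set Filter

/-- `IsSol γ w v v' v''` : `v` solves `v'' − γv − v³ + w = 0` on `[0,∞)` with Neumann
condition at `0` and decay at infinity, with `v` and `v'` in `L²(0,∞)`. -/
def IsSol (γ : ℝ) (w v v' v'' : ℝ → ℝ) : Prop :=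
  (∀ x ∈ Ici (0:ℝ), HasDerivAt v (v' x) x) ∧
  (∀ x ∈ Ici (0:ℝ), HasDerivAt v' (v'' x) x) ∧
  (∀ x ∈ Ici (0:ℝ), v'' x - γ * v x - v x ^ 3 + w x = 0) ∧
  v' 0 = 0 ∧ Tendsto v atTop (nhds 0) ∧
  MemLp v 2 (volume.restrict (Ioi (0:ℝ))) ∧
  MemLp v' 2 (volume.restrict (Ioi (0:ℝ)))

theorem integral_mul_le_sqrt_mul_sqrt {α : Type*} [MeasurableSpace α] {μ : Measure α}
    {f g : α → ℝ} (hf : MemLp f 2 μ) (hg : MemLp g 2 μ) :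
    ∫ a, f a * g a ∂μ ≤ √(∫ a, f a ^ 2 ∂μ) * √(∫ a, g a ^ 2 ∂μ) := by
  have holder := integral_mul_norm_le_Lp_mul_Lq Real.HolderConjugate.two_two
    (f := f) (g := g) (μ := μ) (by simpa using hf) (by simpa using hg)
  simp only [Real.norm_eq_abs, sq_abs, Real.rpow_two, ← Real.sqrt_eq_rpow] at holder
  calc ∫ a, f a * g a ∂μ ≤ ∫ a, |f a| * |g a| ∂μ := by
        simpa only [abs_mul] using
          (le_abs_self _).trans (abs_integral_le_integral_abs (f := fun a => f a * g a))
    _ ≤ _ := holder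

theorem exists_abs_le_of_continuousOn_Ici_of_tendsto {f : ℝ → ℝ} {a l : ℝ}
    (hf : ContinuousOn f (Ici a)) (hlim : Tendsto f atTop (nhds l)) :
    ∃ C, ∀ x ∈ Ici a, |f x| ≤ C := by
  obtain ⟨R, hR⟩ := eventually_atTop.1 (hlim.abs.eventually (eventually_le_nhds (lt_add_one |l|)))
  obtain ⟨C, hC⟩ := (isCompact_Icc (a := a) (b := max R a)).exists_bound_of_continuousOn
    (hf.mono Icc_subset_Ici_self)
  refine ⟨max C (|l| + 1), fun x hx => ?_⟩
  rcases le_total x (max R a) with hxR | hxR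
  · exact (hC x ⟨hx, hxR⟩).trans (le_max_left _ _)
  · exact (hR x ((le_max_left _ _).trans hxR)).trans (le_max_right _ _)

theorem sqrt_add_le_max_one_div_mul_sqrt {γ a b c : ℝ} (hγ : 0 < γ) (ha : 0 ≤ a) (hb : 0 ≤ b)
    (h : γ * a + b ≤ √c * √a) : √(a + b) ≤ max 1 (1 / γ) * √c := by
  set M := max 1 (1 / γ)
  have hM : 1 ≤ M := le_max_left _ _
  have hMγ : 1 ≤ M * γ :=
    calc 1 = 1 / γ * γ := by field_simp
      _ ≤ M * γ := by gcongr; exact le_max_right _ _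
  have hsa := Real.sq_sqrt ha
  have hs : √a ≤ M * √c := by
    rcases (Real.sqrt_nonneg a).eq_or_lt with h0 | hpos
    · rw [← h0]; positivity
    · have : γ * √a ≤ √c := le_of_mul_le_mul_right (by nlinarith) hpos
      nlinarith [Real.sqrt_nonneg c]
  calc √(a + b) ≤ √((M * √c) ^ 2) := by
        gcongr
        nlinarith [Real.sqrt_nonneg a, Real.sqrt_nonneg c]
    _ = M * √c := Real.sqrt_sq (by positivity)

theorem integrable_cube_sub_cube_mul_sub {α : Type*} [MeasurableSpace α] {μ : Measure α}
    {a b : α → ℝ} {C : ℝ} (ha : AEStronglyMeasurable a μ) (hb : AEStronglyMeasurable b μ)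
    (hab : Integrable (fun x => (a x - b x) ^ 2) μ)
    (haC : ∀ᵐ x ∂μ, |a x| ≤ C) (hbC : ∀ᵐ x ∂μ, |b x| ≤ C) :
    Integrable (fun x => (a x ^ 3 - b x ^ 3) * (a x - b x)) μ := by
  refine (hab.const_mul (3 * C ^ 2)).mono' (((ha.pow 3).sub (hb.pow 3)).mul (ha.sub hb)) ?_
  filter_upwards [haC, hbC] with x hax hbx
  have hfactor : (a x ^ 3 - b x ^ 3) * (a x - b x)
      = (a x ^ 2 + a x * b x + b x ^ 2) * (a x - b x) ^ 2 := by ring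
  have hq : |a x ^ 2 + a x * b x + b x ^ 2| ≤ 3 * C ^ 2 := by
    rw [abs_le] at hax hbx ⊢
    constructor <;> nlinarith
  rw [Real.norm_eq_abs, hfactor, abs_mul, abs_sq]
  exact mul_le_mul_of_nonneg_right hq (sq_nonneg _)

/-- The boundary term `u u'` vanishes at infinity because both it and its derivative are
integrable. -/
theorem mul_integral_sq_add_integral_deriv_sq_le {γ a : ℝ} {u u' u'' p f : ℝ → ℝ}
    (hu : ∀ x ∈ Ici a, HasDerivAt u (u' x) x)
    (hu' : ∀ x ∈ Ici a, HasDerivAt u' (u'' x) x)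
    (hode : ∀ x ∈ Ici a, u'' x = γ * u x + p x - f x)
    (hpu : ∀ x ∈ Ioi a, 0 ≤ p x * u x) (hpu_int : IntegrableOn (fun x => p x * u x) (Ioi a))
    (hbdry : u a * u' a = 0)
    (hu2 : MemLp u 2 (volume.restrict (Ioi a))) (hu'2 : MemLp u' 2 (volume.restrict (Ioi a)))
    (hf : MemLp f 2 (volume.restrict (Ioi a))) :
    γ * (∫ x in Ioi a, u x ^ 2) + ∫ x in Ioi a, u' x ^ 2 ≤ ∫ x in Ioi a, f x * u x := by
  have hderiv : ∀ x ∈ Ici a, HasDerivAt (fun y => u y * u' y)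
      (u' x ^ 2 + γ * u x ^ 2 + p x * u x - f x * u x) x := fun x hx =>
    ((hu x hx).mul (hu' x hx)).congr_deriv (by rw [hode x hx]; ring)
  have hint_sq := hu2.integrable_sq
  have hint_sq' := hu'2.integrable_sq
  have hint_fu : IntegrableOn (fun x => f x * u x) (Ioi a) := hf.integrable_mul hu2
  have hint_γ : IntegrableOn (fun x => γ * u x ^ 2) (Ioi a) := hint_sq.const_mul γ
  have hint₂ : IntegrableOn (fun x => u' x ^ 2 + γ * u x ^ 2) (Ioi a) := hint_sq'.add hint_γ
  have hint₃ : IntegrableOn (fun x => u' x ^ 2 + γ * u x ^ 2 + p x * u x) (Ioi a) :=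
    hint₂.add hpu_int
  have hint : IntegrableOn (fun x => u' x ^ 2 + γ * u x ^ 2 + p x * u x - f x * u x) (Ioi a) :=
    hint₃.sub hint_fu
  have hlim : Tendsto (fun y => u y * u' y) atTop (nhds 0) :=
    tendsto_zero_of_hasDerivAt_of_integrableOn_Ioi (fun x hx => hderiv x (Ioi_subset_Ici_self hx))
      hint (hu2.integrable_mul hu'2)
  have henergy := integral_Ioi_of_hasDerivAt_of_tendsto' hderiv hint hlim
  rw [hbdry, integral_sub hint₃ hint_fu, integral_add hint₂ hpu_int,
    integral_add hint_sq' hint_γ, integral_const_mul] at henergy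
  have := setIntegral_nonneg (μ := volume) measurableSet_Ioi hpu
  linarith

/-- For `w₁, w₂ ∈ L²(0,∞)`,
`‖Nw₂ − Nw₁‖_{H¹(0,∞)} ≤ max{1, 1/γ} ‖w₂ − w₁‖_{L²(0,∞)}`. -/
theorem statement7
    (γ : ℝ) (hγ : 0 < γ) (w₁ w₂ v₁ v₁' v₁'' v₂ v₂' v₂'' : ℝ → ℝ)
    (hw₁ : MemLp w₁ 2 (volume.restrict (Ioi (0:ℝ))))
    (hw₂ : MemLp w₂ 2 (volume.restrict (Ioi (0:ℝ))))
    (hsol₁ : IsSol γ w₁ v₁ v₁' v₁'')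
    (hsol₂ : IsSol γ w₂ v₂ v₂' v₂'') :
    Real.sqrt ((∫ x in Ioi (0:ℝ), (v₂ x - v₁ x) ^ 2) +
        ∫ x in Ioi (0:ℝ), (v₂' x - v₁' x) ^ 2) ≤
      max 1 (1 / γ) * Real.sqrt (∫ x in Ioi (0:ℝ), (w₂ x - w₁ x) ^ 2) := by
  obtain ⟨hd₁, hd₁', hode₁, hn₁, hlim₁, hv₁, hv₁'⟩ := hsol₁
  obtain ⟨hd₂, hd₂', hode₂, hn₂, hlim₂, hv₂, hv₂'⟩ := hsol₂
  obtain ⟨C₁, hC₁⟩ := exists_abs_le_of_continuousOn_Ici_of_tendsto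
    (fun x hx => (hd₁ x hx).continuousAt.continuousWithinAt) hlim₁
  obtain ⟨C₂, hC₂⟩ := exists_abs_le_of_continuousOn_Ici_of_tendsto
    (fun x hx => (hd₂ x hx).continuousAt.continuousWithinAt) hlim₂
  have hC₁' : ∀ᵐ x ∂volume.restrict (Ioi (0:ℝ)), |v₁ x| ≤ max C₁ C₂ :=
    ae_restrict_of_forall_mem measurableSet_Ioi fun x hx =>
      (hC₁ x (Ioi_subset_Ici_self hx)).trans (le_max_left _ _)
  have hC₂' : ∀ᵐ x ∂volume.restrict (Ioi (0:ℝ)), |v₂ x| ≤ max C₁ C₂ :=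
    ae_restrict_of_forall_mem measurableSet_Ioi fun x hx =>
      (hC₂ x (Ioi_subset_Ici_self hx)).trans (le_max_right _ _)
  have henergy : γ * (∫ x in Ioi (0:ℝ), (v₂ x - v₁ x) ^ 2) + ∫ x in Ioi (0:ℝ), (v₂' x - v₁' x) ^ 2
      ≤ ∫ x in Ioi (0:ℝ), (w₂ x - w₁ x) * (v₂ x - v₁ x) :=
    mul_integral_sq_add_integral_deriv_sq_le (u := fun x => v₂ x - v₁ x)
      (u' := fun x => v₂' x - v₁' x) (f := fun x => w₂ x - w₁ x)
      (p := fun x => v₂ x ^ 3 - v₁ x ^ 3)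
      (fun x hx => (hd₂ x hx).sub (hd₁ x hx)) (fun x hx => (hd₂' x hx).sub (hd₁' x hx))
      (fun x hx => by linear_combination hode₂ x hx - hode₁ x hx)
      (fun x _ => by nlinarith [sq_nonneg (v₂ x - v₁ x), sq_nonneg (v₂ x + v₁ x)])
      (integrable_cube_sub_cube_mul_sub hv₂.1 hv₁.1 (hv₂.sub hv₁).integrable_sq hC₂' hC₁')
      (by simp [hn₁, hn₂]) (hv₂.sub hv₁) (hv₂'.sub hv₁') (hw₂.sub hw₁)
  exact sqrt_add_le_max_one_div_mul_sqrt hγ (integral_nonneg fun _ => sq_nonneg _)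
    (integral_nonneg fun _ => sq_nonneg _)
    (henergy.trans (integral_mul_le_sqrt_mul_sqrt (hw₂.sub hw₁) (hv₂.sub hv₁)))
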